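/- arXiv:1603.08752 — 3 statements merged into one kernel-verified Lean document; each statement's English description precedes it below -/
import Mathlib

section
/- Let {c_j} be a sequence with Hankel determinants H_k and Hankel polynomials 𝓗_k(x). Suppose H_{k-2} ≠ 0, H_{k-1} = 0, and h_{k-1,1} ≠ 0. Then H_k H_{k-2} = −h_{k-1,1}^2; in particular H_k ≠ 0, and 𝓗_{k-1}(x) ≡ (h_{k-1,1}/H_{k-2}) · 𝓗_{k-2}(x). -/
open Finset Polynomial

/-- The `k`-th Hankel determinant of the sequence `{c_j}`. -/
noncomputable def Hdet (c : ℕ → ℂ) (k : ℕ) : ℂ :=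
  Matrix.det (Matrix.of fun i j : Fin k => c ((i : ℕ) + (j : ℕ)))

/-- The `k`-th Hankel polynomial of the sequence `{c_j}`: the determinant of the
`(k+1)×(k+1)` matrix whose first `k` rows are `(c_{i}, …, c_{i+k})` and whose
last row is `(1, x, …, x^k)`. -/
noncomputable def Hpoly (c : ℕ → ℂ) (k : ℕ) : Polynomial ℂ :=
  Matrix.det (Matrix.of fun i j : Fin (k + 1) =>
    if (i : ℕ) < k then Polynomial.C (c ((i : ℕ) + (j : ℕ))) else Polynomial.X ^ (j : ℕ))

/-!
Write `k = m + 2` and let `A` be the leading `m × m` Hankel block, invertible because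
`H_m ≠ 0`. Each determinant in the statement is `det A` times the determinant of the Schur
complement of `A`: it is `[s₀₀]` for `H_{m+1}`, the symmetric matrix `(s_ab)_{a,b<2}` for
`H_{m+2}`, `[p₀]` for `𝓗_m` and `[[s₀₀, s₀₁], [p₀, p₁]]` for `𝓗_{m+1}`, where `p_b` is a
monic polynomial of degree `m + b`. So `H_{m+1} = 0` forces `s₀₀ = 0`, whence
`H_{m+2} = -H_m s₀₁²`, `𝓗_{m+1} = -s₀₁ 𝓗_m` and `h_{m+1,1} = -s₀₁ H_m`.
-/

open Matrix

theorem det_eq_det_mul_det_schur_fin {R : Type*} [CommRing R] {m n : ℕ}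
    (M : Matrix (Fin (m + n)) (Fin (m + n)) R) (A : Matrix (Fin m) (Fin m) R) [Invertible A]
    (hA : M.submatrix (Fin.castAdd n) (Fin.castAdd n) = A) :
    M.det = A.det * (of fun a b : Fin n => M (Fin.natAdd m a) (Fin.natAdd m b) -
      (fun i => M (Fin.natAdd m a) (Fin.castAdd n i)) ⬝ᵥ
        (⅟A *ᵥ fun j => M (Fin.castAdd n j) (Fin.natAdd m b))).det := by
  have hA' : (M.submatrix finSumFinEquiv finSumFinEquiv).toBlocks₁₁ = A := by
    rw [← hA]; ext; simp [toBlocks₁₁]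
  rw [← det_submatrix_equiv_self finSumFinEquiv, ← fromBlocks_toBlocks (M.submatrix _ _), hA',
    det_fromBlocks₁₁]
  congr 2
  ext a b
  simp [toBlocks₁₂, toBlocks₂₁, toBlocks₂₂, Matrix.mul_assoc, Matrix.mul_apply, mulVec, dotProduct]

def hankelMatrix {α : Type*} (c : ℕ → α) (m : ℕ) : Matrix (Fin m) (Fin m) α :=
  of fun i j => c (i + j)

theorem hankelMatrix_isSymm {α : Type*} (c : ℕ → α) (m : ℕ) : (hankelMatrix c m).IsSymm := by
  ext i j
  simp [hankelMatrix, add_comm]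

/-- Entry `(a, b)` of the Schur complement of the leading block `hankelMatrix c m` in
`hankelMatrix c (m + n)`. -/
noncomputable def hankelSchur (c : ℕ → ℂ) (m a b : ℕ) : ℂ :=
  c (m + a + (m + b)) - (fun i : Fin m => c (m + a + i)) ⬝ᵥ
    ((hankelMatrix c m)⁻¹ *ᵥ fun j : Fin m => c (j + (m + b)))

/-- Entry `b` of the last row of the Schur complement of `hankelMatrix c m` in the matrix
defining `Hpoly c (m + n)`, the row coming from `(1, X, X², …)`. -/
noncomputable def hpolySchur (c : ℕ → ℂ) (m b : ℕ) : ℂ[X] :=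
  X ^ (m + b) - ∑ i : Fin m,
    C (((hankelMatrix c m)⁻¹ *ᵥ fun j : Fin m => c (j + (m + b))) i) * X ^ (i : ℕ)

theorem hankelSchur_comm (c : ℕ → ℂ) (m a b : ℕ) : hankelSchur c m a b = hankelSchur c m b a := by
  have hinv := (hankelMatrix_isSymm c m).inv
  have hsymm (u v : Fin m → ℂ) :
      u ⬝ᵥ ((hankelMatrix c m)⁻¹ *ᵥ v) = v ⬝ᵥ ((hankelMatrix c m)⁻¹ *ᵥ u) := by
    rw [dotProduct_mulVec, ← mulVec_transpose, hinv.eq, dotProduct_comm]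
  rw [hankelSchur, hankelSchur, hsymm]
  simp only [add_comm, add_left_comm]

theorem coeff_hpolySchur (c : ℕ → ℂ) (m b : ℕ) : (hpolySchur c m b).coeff (m + b) = 1 := by
  simp only [hpolySchur, coeff_sub, coeff_X_pow_self, finsetSum_coeff, coeff_C_mul_X_pow]
  rw [Finset.sum_eq_zero fun i _ => if_neg (by omega), sub_zero]

theorem Hdet_add_eq_mul_det_hankelSchur (c : ℕ → ℂ) (m n : ℕ) (h : Hdet c m ≠ 0) :
    Hdet c (m + n) = Hdet c m * (of fun a b : Fin n => hankelSchur c m a b).det := by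
  let := (hankelMatrix c m).invertibleOfIsUnitDet (isUnit_iff_ne_zero.mpr h)
  rw [Hdet, det_eq_det_mul_det_schur_fin _ (hankelMatrix c m) (by ext; simp [hankelMatrix])]
  rfl

theorem Hpoly_add_eq_mul_det_hpolySchur (c : ℕ → ℂ) (m n : ℕ) (h : Hdet c m ≠ 0) :
    Hpoly c (m + n) = C (Hdet c m) * (of fun a b : Fin (n + 1) =>
      if (a : ℕ) < n then C (hankelSchur c m a b) else hpolySchur c m b).det := by
  let := (hankelMatrix c m).invertibleOfIsUnitDet (isUnit_iff_ne_zero.mpr h)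
  let : Invertible (C.mapMatrix (hankelMatrix c m)) := Invertible.map C.mapMatrix _
  have hj (j : Fin m) : (j : ℕ) < m + n := by omega
  change det (of fun i j : Fin (m + (n + 1)) =>
    if (i : ℕ) < m + n then C (c (i + j)) else X ^ (j : ℕ)) = _
  rw [det_eq_det_mul_det_schur_fin _ (C.mapMatrix (hankelMatrix c m))
    (by ext i j; simp [hankelMatrix, hj]), ← RingHom.map_det]
  congr 2
  ext a b : 1
  simp only [of_apply]
  rw [← map_invOf C.mapMatrix (hankelMatrix c m), invOf_eq_nonsing_inv, RingHom.mapMatrix_apply]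
  simp only [Fin.val_natAdd, Fin.val_castAdd, Nat.add_lt_add_iff_left, hj, if_true]
  split_ifs
  · simp [hankelSchur, RingHom.map_dotProduct, Function.comp_def, RingHom.map_mulVec]
  · simp only [hpolySchur, dotProduct, RingHom.map_mulVec, mul_comm]
    rfl

theorem Hpoly_eq_C_mul_hpolySchur {c : ℕ → ℂ} {m : ℕ} (h : Hdet c m ≠ 0) :
    Hpoly c m = C (Hdet c m) * hpolySchur c m 0 := by
  simpa using Hpoly_add_eq_mul_det_hpolySchur c m 0 h

theorem coeff_Hpoly_self_of_Hdet_ne_zero {c : ℕ → ℂ} {m : ℕ} (h : Hdet c m ≠ 0) :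
    (Hpoly c m).coeff m = Hdet c m := by
  have hlead : (hpolySchur c m 0).coeff m = 1 := coeff_hpolySchur c m 0
  rw [Hpoly_eq_C_mul_hpolySchur h, coeff_C_mul, hlead, mul_one]

section Degenerate

variable {c : ℕ → ℂ} {m : ℕ}

theorem hankelSchur_zero_zero_of_Hdet_succ_eq_zero (h : Hdet c m ≠ 0)
    (h1 : Hdet c (m + 1) = 0) : hankelSchur c m 0 0 = 0 := by
  have := Hdet_add_eq_mul_det_hankelSchur c m 1 h
  rw [h1, det_unique] at this
  exact (mul_eq_zero.mp this.symm).resolve_left h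

theorem Hdet_add_two_of_Hdet_succ_eq_zero (h : Hdet c m ≠ 0) (h1 : Hdet c (m + 1) = 0) :
    Hdet c (m + 2) = -(Hdet c m * hankelSchur c m 0 1 ^ 2) := by
  rw [Hdet_add_eq_mul_det_hankelSchur c m 2 h, det_fin_two]
  simp only [of_apply, Fin.val_zero, Fin.val_one, hankelSchur_comm c m 1 0,
    hankelSchur_zero_zero_of_Hdet_succ_eq_zero h h1]
  ring

theorem Hpoly_succ_of_Hdet_succ_eq_zero (h : Hdet c m ≠ 0) (h1 : Hdet c (m + 1) = 0) :
    Hpoly c (m + 1) = -C (hankelSchur c m 0 1) * Hpoly c m := by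
  rw [Hpoly_add_eq_mul_det_hpolySchur c m 1 h, det_fin_two, Hpoly_eq_C_mul_hpolySchur h]
  simp only [of_apply, Fin.val_zero, Fin.val_one, zero_lt_one, lt_irrefl, if_true, if_false,
    hankelSchur_zero_zero_of_Hdet_succ_eq_zero h h1, map_zero, zero_mul, zero_sub]
  ring

end Degenerate

theorem hankel_poly_degenerate_nonzero (c : ℕ → ℂ) (k : ℕ) (hk : 2 ≤ k)
    (h2 : Hdet c (k - 2) ≠ 0) (h1 : Hdet c (k - 1) = 0)
    (h11 : (Hpoly c (k - 1)).coeff (k - 2) ≠ 0) :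
    Hdet c k * Hdet c (k - 2) = -((Hpoly c (k - 1)).coeff (k - 2)) ^ 2 ∧
    Hdet c k ≠ 0 ∧
    Hpoly c (k - 1) =
      C ((Hpoly c (k - 1)).coeff (k - 2) / Hdet c (k - 2)) * Hpoly c (k - 2) := by
  obtain ⟨m, rfl⟩ : ∃ m, k = m + 2 := ⟨k - 2, by omega⟩
  simp only [show m + 2 - 1 = m + 1 from rfl, Nat.add_sub_cancel] at h1 h2 h11 ⊢
  set s := hankelSchur c m 0 1
  have hP1 : Hpoly c (m + 1) = -C s * Hpoly c m := Hpoly_succ_of_Hdet_succ_eq_zero h2 h1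
  have hcoeff : (Hpoly c (m + 1)).coeff m = -(s * Hdet c m) := by
    rw [hP1, ← C_neg, coeff_C_mul, coeff_Hpoly_self_of_Hdet_ne_zero h2, neg_mul]
  have hprod : Hdet c (m + 2) * Hdet c m = -((Hpoly c (m + 1)).coeff m) ^ 2 := by
    rw [Hdet_add_two_of_Hdet_succ_eq_zero h2 h1, hcoeff]
    ring
  refine ⟨hprod, fun h0 => h11 ?_, ?_⟩
  · rw [h0, zero_mul, eq_comm, neg_eq_zero] at hprod
    exact pow_eq_zero_iff two_ne_zero |>.mp hprod
  · rw [hcoeff, neg_div, mul_div_cancel_right₀ _ h2, C_neg]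
    exact hP1
end

section
/- Let x_1,...,x_N be distinct, y_1,...,y_N nonzero, W(x)=∏(x−x_j), and τ̃_k = ∑_{j=1}^N x_j^k/(y_j W'(x_j)). Then the N-th Hankel polynomial satisfies 𝓗_N(x;{τ̃}) ≡ ((−1)^{N(N−1)/2} / ∏_{j=1}^N y_j) · ∏_{j=1}^N (x − x_j). -/
open Finset Polynomial

/-- `Wd x j = ∏_{i ≠ j} (x j - x i)`, i.e. `W'(x_j)` where `W(x) = ∏ (x - x_i)`. -/
noncomputable def Wd {N : ℕ} (x : Fin N → ℂ) (j : Fin N) : ℂ :=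
  ∏ i ∈ Finset.univ.erase j, (x j - x i)

/-!
Put `a_j = (y_j W'(x_j))⁻¹`, so that `τ̃_k = ∑ a_j x_j ^ k` is a moment sequence.
Then the Hankel matrix with the row `(1, X, …, X^N)` appended factors as
`diag(Vᵀ diag(a), 1) · V(x_1, …, x_N, X)` with `V` the Vandermonde matrix, so its
determinant is `(∏ a_j) Δ² ∏ (X - x_j)` with `Δ = det V(x_1, …, x_N) ≠ 0`.
Since `∏_j W'(x_j) = (-1)^(N(N-1)/2) Δ²`, the constant is `(-1)^(N(N-1)/2) / ∏ y_j`.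
-/

open Matrix

theorem Fin.sum_card_Ioi (n : ℕ) : ∑ i : Fin n, #(Ioi i) = n * (n - 1) / 2 :=
  calc ∑ i : Fin n, #(Ioi i)
      = ∑ k ∈ range n, (n - 1 - k) := by
        simp_rw [Fin.card_Ioi]
        exact Fin.sum_univ_eq_sum_range _ n
    _ = ∑ k ∈ range n, k := sum_range_reflect id n
    _ = n * (n - 1) / 2 := sum_range_id n

theorem Fin.prod_Ioi_castSucc {M : Type*} [CommMonoid M] {n : ℕ} (f : Fin (n + 1) → M)
    (i : Fin n) : ∏ j ∈ Ioi i.castSucc, f j = (∏ j ∈ Ioi i, f j.castSucc) * f (Fin.last n) := by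
  rw [← Ioc_top, Fin.top_eq_last, ← Ioo_insert_right (Fin.castSucc_lt_last i),
    prod_insert (by simp), ← Fin.map_castSuccEmb_Ioi, prod_map, mul_comm]
  rfl

section CommRing

variable {R : Type*} [CommRing R] {n : ℕ}

theorem Matrix.det_vandermonde_snoc (v : Fin n → R) (a : R) :
    det (vandermonde (Fin.snoc v a : Fin (n + 1) → R)) =
      det (vandermonde v) * ∏ i, (a - v i) := by
  have h_last : Ioi (Fin.last n) = ∅ := by rw [← Fin.top_eq_last, Ioi_top]
  simp [det_vandermonde, Fin.prod_univ_castSucc, Fin.prod_Ioi_castSucc, prod_mul_distrib,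
    h_last]

theorem Matrix.prod_prod_erase_sub_eq_neg_one_pow_mul_det_vandermonde_sq (v : Fin n → R) :
    ∏ i, ∏ j ∈ univ.erase i, (v i - v j) =
      (-1) ^ (n * (n - 1) / 2) * det (vandermonde v) ^ 2 := by
  have h := prod_prod_Ioi_mul_eq_prod_prod_off_diag fun i j => v j - v i
  simp only [compl_singleton] at h
  rw [← h, det_vandermonde, ← Fin.sum_card_Ioi, ← prod_pow_eq_pow_sum, ← prod_pow,
    ← prod_mul_distrib]
  refine prod_congr rfl fun i _ => ?_
  rw [← prod_pow, ← prod_const, ← prod_mul_distrib]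
  exact prod_congr rfl fun j _ => by ring

noncomputable def hankelPolyMatrix (c : ℕ → R) (n : ℕ) :
    Matrix (Fin (n + 1)) (Fin (n + 1)) R[X] :=
  of fun i j => if (i : ℕ) < n then C (c (i + j)) else X ^ (j : ℕ)

theorem hankelPolyMatrix_eq_mul_of_moments (a v : Fin n → R) (c : ℕ → R)
    (hc : ∀ k, c k = ∑ l, a l * v l ^ k) :
    hankelPolyMatrix c n =
      reindex finSumFinEquiv finSumFinEquiv
          (fromBlocks (((vandermonde v)ᵀ * diagonal a).map C) 0 0 1) *
        vandermonde (Fin.snoc (fun l => C (v l)) X) := by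
  ext i j : 1
  rw [mul_apply, Fin.sum_univ_castSucc]
  induction i using Fin.lastCases with
  | last => simp [hankelPolyMatrix, finSumFinEquiv_symm_last, finSumFinEquiv_symm_apply_castSucc]
  | cast i =>
    simp only [hankelPolyMatrix, of_apply, Fin.val_castSucc, Fin.is_lt, ↓reduceIte, hc, pow_add,
      map_sum, map_mul, map_pow, reindex_apply, submatrix_apply,
      finSumFinEquiv_symm_apply_castSucc, finSumFinEquiv_symm_last, fromBlocks_apply₁₁,
      fromBlocks_apply₁₂, Matrix.zero_apply, zero_mul, add_zero, Matrix.map_mul, diagonal_map,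
      map_zero, mul_diagonal, map_apply, transpose_apply, vandermonde_apply, Fin.snoc_castSucc]
    exact sum_congr rfl fun l _ => by ring

theorem det_hankelPolyMatrix_of_moments (a v : Fin n → R) (c : ℕ → R)
    (hc : ∀ k, c k = ∑ l, a l * v l ^ k) :
    det (hankelPolyMatrix c n) =
      C ((∏ l, a l) * det (vandermonde v) ^ 2) * ∏ l, (X - C (v l)) := by
  rw [hankelPolyMatrix_eq_mul_of_moments a v c hc, det_mul, det_reindex_self,
    det_fromBlocks_zero₂₁, det_one, mul_one, ← RingHom.mapMatrix_apply, ← RingHom.map_det,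
    det_mul, det_transpose, det_diagonal, det_vandermonde_snoc]
  simp only [det_vandermonde, map_mul, map_prod, map_sub, map_pow]
  ring

end CommRing

theorem hankel_poly_N_eq_nodes_poly_general (N : ℕ) (x : Fin N → ℂ)
    (hx : Function.Injective x) (y : Fin N → ℂ)
    (t : ℕ → ℂ) (ht : ∀ k, t k = ∑ j, x j ^ k / (y j * Wd x j)) :
    Hpoly t N =
      C ((-1 : ℂ) ^ (N * (N - 1) / 2) / ∏ j, y j) * ∏ j, (X - C (x j)) := by
  have h_moments : ∀ k, t k = ∑ j, (y j * Wd x j)⁻¹ * x j ^ k := fun k => by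
    simp only [ht, div_eq_inv_mul]
  have h_prod_Wd : ∏ j, Wd x j = (-1) ^ (N * (N - 1) / 2) * det (vandermonde x) ^ 2 :=
    prod_prod_erase_sub_eq_neg_one_pow_mul_det_vandermonde_sq x
  have h_vdm : det (vandermonde x) ≠ 0 := det_vandermonde_ne_zero_iff.mpr hx
  rw [show Hpoly t N = det (hankelPolyMatrix t N) from rfl,
    det_hankelPolyMatrix_of_moments _ x t h_moments, prod_inv_distrib, prod_mul_distrib,
    h_prod_Wd]
  congr 2
  field_simp
  rw [← pow_mul, (Even.mul_left even_two _).neg_one_pow]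

theorem hankel_poly_N_eq_nodes_poly (N : ℕ) (hN : 0 < N) (x : Fin N → ℂ)
    (hx : Function.Injective x) (y : Fin N → ℂ) (hy : ∀ j, y j ≠ 0)
    (t : ℕ → ℂ) (ht : ∀ k, t k = ∑ j, x j ^ k / (y j * Wd x j)) :
    Hpoly t N =
      C ((-1 : ℂ) ^ (N * (N - 1) / 2) / ∏ j, y j) * ∏ j, (X - C (x j)) :=
  hankel_poly_N_eq_nodes_poly_general N x hx y t ht
end

section
/- Let x_1,...,x_N be distinct, p(x) a polynomial of degree n < N−2 with simple zeros and p(x_j) = y_j ≠ 0 for all j, W(x) = ∏(x−x_j), τ̃_k = ∑ x_j^k/(y_j W'(x_j)). Then 𝓗_K(x;{τ̃}) ≡ 0 for every K with n+1 ≤ K ≤ N−2. -/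
open Finset Polynomial

/-!
The sequence `τ̃` is the moment sequence of the functional `L f = ∑ⱼ f(xⱼ) / (yⱼ W'(xⱼ))`.
Since `p(xⱼ) = yⱼ`, `L (X ^ i * p) = ∑ⱼ xⱼ ^ i / W'(xⱼ)`, which vanishes for `i ≤ N - 2` (it is the
coefficient of `X ^ (N - 1)` in the Lagrange interpolant of `X ^ i`). Hence `p` is orthogonal to
`1, X, …, X ^ K` with respect to `L`, and as `deg p < K` both `p` and `X p` give kernel vectors of
the `K × (K + 1)` Hankel matrix. The vector `X • coeffs(p) - coeffs(X p)`, with `X` as a scalar,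
then also kills the last row `(1, X, …, X ^ K)`, so the determinant vanishes.
-/

section Moments

variable {R : Type*} [CommSemiring R]

noncomputable def momentFunctional (c : ℕ → R) : R[X] →ₗ[R] R :=
  lsum fun k => c k • LinearMap.id

theorem momentFunctional_monomial (c : ℕ → R) (k : ℕ) (a : R) :
    momentFunctional c (monomial k a) = c k * a := by
  simp [momentFunctional, sum_monomial_index]

theorem momentFunctional_X_pow_mul (c : ℕ → R) (i : ℕ) (q : R[X]) :
    momentFunctional c (X ^ i * q) = q.sum fun j a => c (i + j) * a := by
  conv_lhs => rw [← sum_monomial_eq q]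
  simp only [Polynomial.sum_def, Finset.mul_sum, map_sum, X_pow_mul_monomial,
    momentFunctional_monomial, add_comm]

theorem momentFunctional_X_pow_mul_eq_sum_fin (c : ℕ → R) (i : ℕ) {K : ℕ} {q : R[X]}
    (hq : q.degree < K) :
    momentFunctional c (X ^ i * q) = ∑ j : Fin K, c (i + j) * q.coeff j := by
  rw [momentFunctional_X_pow_mul, sum_fin (fun j a => c (i + j) * a) (fun _ => mul_zero _) hq]

theorem momentFunctional_eq_sum_eval_div {F ι : Type*} [Field F] [Fintype ι] {c : ℕ → F}
    {x d : ι → F} (hc : ∀ k, c k = ∑ j, x j ^ k / d j) (r : F[X]) :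
    momentFunctional c r = ∑ j, r.eval (x j) / d j := by
  induction r using Polynomial.induction_on' with
  | add r s hr hs => simp only [map_add, hr, hs, eval_add, add_div, Finset.sum_add_distrib]
  | monomial k a =>
    simp only [momentFunctional_monomial, hc, eval_monomial, Finset.sum_mul]
    exact Finset.sum_congr rfl fun j _ => by ring

end Moments

theorem sum_fin_X_pow_mul_C_coeff {R : Type*} [CommSemiring R] {K : ℕ} {q : R[X]}
    (hq : q.degree < K) : ∑ j : Fin K, X ^ (j : ℕ) * C (q.coeff j) = q := by
  rw [sum_fin (fun j a => X ^ j * C a) (fun _ => by simp) hq]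
  simpa only [mul_comm] using sum_C_mul_X_pow_eq q

theorem Hpoly_eq_zero_of_momentFunctional_X_pow_mul_eq_zero (c : ℕ → ℂ) {K : ℕ} {q : ℂ[X]}
    (hq : q ≠ 0) (hdeg : q.natDegree < K)
    (horth : ∀ i ≤ K, momentFunctional c (X ^ i * q) = 0) : Hpoly c K = 0 := by
  have hq' : q.degree < ↑(K + 1) :=
    (degree_le_of_natDegree_le hdeg.le).trans_lt (by exact_mod_cast K.lt_succ_self)
  have hXq : (X * q).degree < ↑(K + 1) :=
    (degree_le_of_natDegree_le (natDegree_X_mul hq).le).trans_lt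
      (by exact_mod_cast (by omega : q.natDegree + 1 < K + 1))
  rw [Hpoly, ← Matrix.exists_mulVec_eq_zero_iff]
  refine ⟨fun j => X * C (q.coeff j) - C ((X * q).coeff j), fun h => ?_, ?_⟩
  · have hcoeff := congrArg (fun v => (v ⟨q.natDegree, by omega⟩).coeff 1) h
    exact hq (by simpa using hcoeff)
  · funext i
    simp only [Matrix.mulVec, dotProduct, Matrix.of_apply]
    split_ifs with hi
    · simp only [mul_sub, ← mul_assoc, mul_comm _ X, mul_assoc X, ← C_mul,
        Finset.sum_sub_distrib, ← Finset.mul_sum, ← map_sum]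
      rw [← momentFunctional_X_pow_mul_eq_sum_fin c i hq',
        ← momentFunctional_X_pow_mul_eq_sum_fin c i hXq, ← mul_assoc, ← pow_succ,
        horth i hi.le, horth (i + 1) hi]
      simp
    · simp only [mul_sub, Finset.sum_sub_distrib, mul_left_comm _ X, ← Finset.mul_sum,
        sum_fin_X_pow_mul_C_coeff hq', sum_fin_X_pow_mul_C_coeff hXq, sub_self, Pi.zero_apply]

theorem sum_pow_div_Wd_eq_zero {N : ℕ} {x : Fin N → ℂ} (hx : Function.Injective x)
    {m : ℕ} (hm : m + 2 ≤ N) : ∑ j, x j ^ m / Wd x j = 0 := by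
  have hdeg : (X ^ m : ℂ[X]).degree < (Finset.univ : Finset (Fin N)).card := by
    simpa using (by exact_mod_cast (by omega : m < N) : (m : WithBot ℕ) < N)
  have := Lagrange.coeff_eq_sum hx.injOn hdeg
  simpa [Wd, coeff_X_pow, show N - 1 ≠ m by omega, eq_comm] using this

theorem hankel_poly_vanish_of_redundant_table_general (N n : ℕ)
    (x : Fin N → ℂ) (hx : Function.Injective x)
    (p : Polynomial ℂ) (hpdeg : p.natDegree = n) (hp0 : p.leadingCoeff ≠ 0)
    (y : Fin N → ℂ) (hy : ∀ j, y j = p.eval (x j)) (hy0 : ∀ j, y j ≠ 0)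
    (t : ℕ → ℂ) (ht : ∀ k, t k = ∑ j, x j ^ k / (y j * Wd x j)) :
    ∀ K : ℕ, n + 1 ≤ K → K ≤ N - 2 → Hpoly t K = 0 := by
  intro K hK1 hK2
  refine Hpoly_eq_zero_of_momentFunctional_X_pow_mul_eq_zero t (leadingCoeff_ne_zero.mp hp0)
    (by omega) fun i hi => ?_
  have hterm : ∀ j, (X ^ i * p).eval (x j) / (y j * Wd x j) = x j ^ i / Wd x j := fun j => by
    rw [eval_mul, eval_pow, eval_X, ← hy, mul_comm (y j), mul_div_mul_right _ _ (hy0 j)]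
  rw [momentFunctional_eq_sum_eval_div ht, Finset.sum_congr rfl fun j _ => hterm j]
  exact sum_pow_div_Wd_eq_zero hx (by omega)

theorem hankel_poly_vanish_of_redundant_table (N n : ℕ) (hn : n + 2 < N)
    (x : Fin N → ℂ) (hx : Function.Injective x)
    (p : Polynomial ℂ) (hpdeg : p.natDegree = n) (hp0 : p.leadingCoeff ≠ 0)
    (hsimple : p.roots.Nodup)
    (y : Fin N → ℂ) (hy : ∀ j, y j = p.eval (x j)) (hy0 : ∀ j, y j ≠ 0)
    (t : ℕ → ℂ) (ht : ∀ k, t k = ∑ j, x j ^ k / (y j * Wd x j)) :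
    ∀ K : ℕ, n + 1 ≤ K → K ≤ N - 2 → Hpoly t K = 0 :=
  hankel_poly_vanish_of_redundant_table_general N n x hx p hpdeg hp0 y hy hy0 t ht
end
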